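/- arXiv:2311.02728 — 5 statements merged into one kernel-verified Lean document; each statement's English description precedes it below -/
import Mathlib

section
/- Let A ⊂ ℝ be an almost periodic set. Then there exists k₂ ∈ ℕ such that for every h > 0 and all x₁, x₂ ∈ ℝ, |#(A ∩ [x₁, x₁+h)) − #(A ∩ [x₂, x₂+h))| ≤ k₂. -/
/-- A set `E ⊆ ℝ` is relatively dense. -/
def RelativelyDense (E : Set ℝ) : Prop :=
  ∃ L > (0:ℝ), ∀ x : ℝ, ∃ τ ∈ E, τ ∈ Set.Ioo x (x + L)

/-- The multiset `{a n}` is an almost periodic set. -/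
def IsAPSet (a : ℤ → ℝ) : Prop :=
  ∀ ε > (0:ℝ), RelativelyDense
    {τ : ℝ | ∃ σ : ℤ ≃ ℤ, ∀ n : ℤ, |a n + τ - a (σ n)| < ε}

/-- Shifting an interval by a `1`-almost period increases the count only by
moving to a slightly enlarged interval. -/
lemma ap_shift (a : ℤ → ℝ) (hfin : ∀ x y : ℝ, {n : ℤ | a n ∈ Set.Icc x y}.Finite)
    (τ : ℝ) (σ : ℤ ≃ ℤ) (hσ : ∀ n : ℤ, |a n + τ - a (σ n)| < 1) (u v : ℝ) :
    {n : ℤ | a n ∈ Set.Icc u v}.ncard ≤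
      {n : ℤ | a n ∈ Set.Icc (u + τ - 1) (v + τ + 1)}.ncard := by
  refine Set.ncard_le_ncard_of_injOn σ ?_ σ.injective.injOn (hfin _ _)
  intro n hn
  have h1 := hσ n
  rw [abs_lt] at h1
  simp only [Set.mem_setOf_eq, Set.mem_Icc] at hn ⊢
  constructor <;> linarith [hn.1, hn.2, h1.1, h1.2]

/-- uniform bound on the discrepancy of counts of an almost periodic set
over half-intervals of the same length. -/
theorem ap_set_count_discrepancy (a : ℤ → ℝ)
    (hfin : ∀ x y : ℝ, {n : ℤ | a n ∈ Set.Icc x y}.Finite)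
    (hap : IsAPSet a) :
    ∃ k₂ : ℕ, ∀ h > (0:ℝ), ∀ x₁ x₂ : ℝ,
      |(Nat.card {n : ℤ | a n ∈ Set.Ico x₁ (x₁ + h)} : ℝ) -
        (Nat.card {n : ℤ | a n ∈ Set.Ico x₂ (x₂ + h)} : ℝ)| ≤ k₂ := by
  obtain ⟨L0, hL0, hEL0⟩ := hap 1 one_pos
  set L := max L0 2 with hLdef
  have hL2 : (2:ℝ) ≤ L := le_max_right _ _
  have hE : ∀ x : ℝ, ∃ τ, (∃ σ : ℤ ≃ ℤ, ∀ n, |a n + τ - a (σ n)| < 1) ∧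
      τ ∈ Set.Ioo x (x + L) := by
    intro x
    obtain ⟨τ, hτE, hτ1, hτ2⟩ := hEL0 x
    exact ⟨τ, hτE, hτ1, hτ2.trans_le (by have := le_max_left L0 2; linarith)⟩
  set C := {n : ℤ | a n ∈ Set.Icc (-2) (2 * L)}.ncard with hC
  -- uniform bound on intervals of length at most L
  have hshort : ∀ x ℓ : ℝ, ℓ ≤ L → {n : ℤ | a n ∈ Set.Icc x (x + ℓ)}.ncard ≤ C := by
    intro x ℓ hℓ
    obtain ⟨τ, ⟨σ, hσ⟩, hτ1, hτ2⟩ := hE (-x - 1)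
    calc {n : ℤ | a n ∈ Set.Icc x (x + ℓ)}.ncard
        ≤ {n : ℤ | a n ∈ Set.Icc (x + τ - 1) (x + ℓ + τ + 1)}.ncard :=
          ap_shift a hfin τ σ hσ x (x + ℓ)
      _ ≤ C := by
          apply Set.ncard_le_ncard _ (hfin _ _)
          intro n hn
          simp only [Set.mem_setOf_eq, Set.mem_Icc] at hn ⊢
          constructor <;> linarith [hn.1, hn.2]
  have key : ∀ h : ℝ, 0 < h → ∀ x₁ x₂ : ℝ,
      {n : ℤ | a n ∈ Set.Ico x₁ (x₁ + h)}.ncard ≤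
        {n : ℤ | a n ∈ Set.Ico x₂ (x₂ + h)}.ncard + 2 * C := by
    intro h hh x₁ x₂
    obtain ⟨τ, ⟨σ, hσ⟩, hτ1, hτ2⟩ := hE (x₂ - x₁ - 1)
    have step1 : {n : ℤ | a n ∈ Set.Ico x₁ (x₁ + h)}.ncard ≤
        {n : ℤ | a n ∈ Set.Icc x₁ (x₁ + h)}.ncard := by
      apply Set.ncard_le_ncard _ (hfin _ _)
      intro n hn
      exact Set.Ico_subset_Icc_self hn
    have step2 := ap_shift a hfin τ σ hσ x₁ (x₁ + h)
    have step3 : {n : ℤ | a n ∈ Set.Icc (x₁ + τ - 1) (x₁ + h + τ + 1)}.ncard ≤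
        {n : ℤ | a n ∈ Set.Icc (x₂ - 2) (x₂ + h + L)}.ncard := by
      apply Set.ncard_le_ncard _ (hfin _ _)
      intro n hn
      simp only [Set.mem_setOf_eq, Set.mem_Icc] at hn ⊢
      constructor <;> linarith [hn.1, hn.2]
    have hsub : {n : ℤ | a n ∈ Set.Icc (x₂ - 2) (x₂ + h + L)} ⊆
        ({n : ℤ | a n ∈ Set.Icc (x₂ - 2) ((x₂ - 2) + 2)} ∪
          {n : ℤ | a n ∈ Set.Ico x₂ (x₂ + h)}) ∪
        {n : ℤ | a n ∈ Set.Icc (x₂ + h) ((x₂ + h) + L)} := by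
      intro n hn
      simp only [Set.mem_setOf_eq, Set.mem_Icc, Set.mem_Ico, Set.mem_union] at hn ⊢
      rcases lt_or_ge (a n) x₂ with h1 | h1
      · exact Or.inl (Or.inl ⟨hn.1, by linarith⟩)
      · rcases lt_or_ge (a n) (x₂ + h) with h2 | h2
        · exact Or.inl (Or.inr ⟨h1, h2⟩)
        · exact Or.inr ⟨h2, by linarith [hn.2]⟩
    have hfinU : (({n : ℤ | a n ∈ Set.Icc (x₂ - 2) ((x₂ - 2) + 2)} ∪
          {n : ℤ | a n ∈ Set.Ico x₂ (x₂ + h)}) ∪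
        {n : ℤ | a n ∈ Set.Icc (x₂ + h) ((x₂ + h) + L)}).Finite := by
      refine Set.Finite.union (Set.Finite.union (hfin _ _) ?_) (hfin _ _)
      exact (hfin x₂ (x₂ + h)).subset (fun n hn => Set.Ico_subset_Icc_self hn)
    have split : {n : ℤ | a n ∈ Set.Icc (x₂ - 2) (x₂ + h + L)}.ncard ≤
        {n : ℤ | a n ∈ Set.Icc (x₂ - 2) ((x₂ - 2) + 2)}.ncard +
        {n : ℤ | a n ∈ Set.Ico x₂ (x₂ + h)}.ncard +
        {n : ℤ | a n ∈ Set.Icc (x₂ + h) ((x₂ + h) + L)}.ncard := by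
      calc {n : ℤ | a n ∈ Set.Icc (x₂ - 2) (x₂ + h + L)}.ncard
          ≤ (({n : ℤ | a n ∈ Set.Icc (x₂ - 2) ((x₂ - 2) + 2)} ∪
              {n : ℤ | a n ∈ Set.Ico x₂ (x₂ + h)}) ∪
            {n : ℤ | a n ∈ Set.Icc (x₂ + h) ((x₂ + h) + L)}).ncard :=
            Set.ncard_le_ncard hsub hfinU
        _ ≤ ({n : ℤ | a n ∈ Set.Icc (x₂ - 2) ((x₂ - 2) + 2)} ∪
              {n : ℤ | a n ∈ Set.Ico x₂ (x₂ + h)}).ncard +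
            {n : ℤ | a n ∈ Set.Icc (x₂ + h) ((x₂ + h) + L)}.ncard :=
            Set.ncard_union_le _ _
        _ ≤ _ := by
            have := Set.ncard_union_le {n : ℤ | a n ∈ Set.Icc (x₂ - 2) ((x₂ - 2) + 2)}
              {n : ℤ | a n ∈ Set.Ico x₂ (x₂ + h)}
            omega
    have b1 := hshort (x₂ - 2) 2 hL2
    have b3 := hshort (x₂ + h) L le_rfl
    omega
  refine ⟨2 * C, ?_⟩
  intro h hh x₁ x₂
  have e1 : Nat.card {n : ℤ | a n ∈ Set.Ico x₁ (x₁ + h)} =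
      {n : ℤ | a n ∈ Set.Ico x₁ (x₁ + h)}.ncard := Nat.card_coe_set_eq _
  have e2 : Nat.card {n : ℤ | a n ∈ Set.Ico x₂ (x₂ + h)} =
      {n : ℤ | a n ∈ Set.Ico x₂ (x₂ + h)}.ncard := Nat.card_coe_set_eq _
  have k1 := key h hh x₁ x₂
  have k2 := key h hh x₂ x₁
  rw [abs_sub_le_iff]
  constructor
  · rw [sub_le_iff_le_add, e1, e2]
    exact_mod_cast k1.trans (Nat.le_of_eq (Nat.add_comm _ _))
  · rw [sub_le_iff_le_add, e1, e2]
    exact_mod_cast k2.trans (Nat.le_of_eq (Nat.add_comm _ _))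
end

section
/- Let A ⊂ ℝ be an almost periodic set. Then there exists a strictly positive real number d (the density of A) such that for every η > 0 there is N_η with: for every half-interval I of length l(I) > N_η, |#(A ∩ I)/l(I) − d| < η. In other words, #(A ∩ I)/l(I) → d uniformly as l(I) → ∞. -/
open Set

theorem exists_abs_sub_mul_le_of_quasiAdditive (v : ℕ → ℝ) (K : ℝ)
    (hv : ∀ m n, |v (m + n) - v m - v n| ≤ K) : ∃ d : ℝ, ∀ n : ℕ, |v n - d * n| ≤ K := by
  have hsuper : ∀ m n : ℕ, (n + 1) * (v m - K) ≤ v ((n + 1) * m) - K := by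
    intro m n
    induction n with
    | zero => simp
    | succ n ih =>
      have := (abs_le.mp (hv ((n + 1) * m) m)).1
      rw [show (n + 1 + 1) * m = (n + 1) * m + m by ring]
      push_cast at *
      linarith
  have hsub : ∀ m n : ℕ, v ((n + 1) * m) + K ≤ (n + 1) * (v m + K) := by
    intro m n
    induction n with
    | zero => simp
    | succ n ih =>
      have := (abs_le.mp (hv ((n + 1) * m) m)).2
      rw [show (n + 1 + 1) * m = (n + 1) * m + m by ring]
      push_cast at *
      linarith
  -- `v - K` is superadditive and `v + K` subadditive; compare both at the length `(m + 1) (n + 1)`.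
  have hle : ∀ m n : ℕ, (v (m + 1) - K) / (m + 1) ≤ (v (n + 1) + K) / (n + 1) := by
    intro m n
    rw [div_le_div_iff₀ (by positivity) (by positivity)]
    have h1 := hsuper (m + 1) n
    have h2 := hsub (n + 1) m
    rw [mul_comm (n + 1) (m + 1)] at h1
    linarith [(abs_nonneg _).trans (hv 0 0)]
  refine ⟨⨆ m : ℕ, (v (m + 1) - K) / (m + 1), fun n => ?_⟩
  rcases n with _ | n
  · simpa using hv 0 0
  · have hlo := le_ciSup ⟨_, forall_mem_range.mpr fun m => hle m 0⟩ n
    have hhi := ciSup_le fun m => hle m n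
    rw [div_le_iff₀ (by positivity)] at hlo
    rw [le_div_iff₀ (by positivity)] at hhi
    push_cast
    rw [abs_le]
    constructor <;> linarith

theorem abs_sub_mul_le_of_monotoneOn_of_forall_nat {u : ℝ → ℝ} (hu : MonotoneOn u (Ici 0))
    {d K : ℝ} (hK : ∀ n : ℕ, |u n - d * n| ≤ K) {h : ℝ} (hh : 0 ≤ h) :
    |u h - d * h| ≤ K + |d| := by
  set n := ⌊h⌋₊
  have hn : (n : ℝ) ≤ h := Nat.floor_le hh
  have hn' : h < n + 1 := Nat.lt_floor_add_one h
  have hlo : u n ≤ u h := hu (mem_Ici.mpr n.cast_nonneg) (mem_Ici.mpr hh) hn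
  have hhi : u h ≤ u (n + 1) := hu (mem_Ici.mpr hh) (mem_Ici.mpr (by positivity)) hn'.le
  have h1 := abs_le.mp (hK n)
  have h2 := abs_le.mp (hK (n + 1))
  push_cast at h2
  have h3 := abs_le.mp (le_refl |d|)
  rw [abs_le]
  constructor <;> nlinarith

section IntervalFunction

variable {φ : ℝ → ℝ → ℝ} {c : ℝ}

theorem monotoneOn_of_additive_of_nonneg
    (hadd : ∀ x s t, 0 ≤ s → 0 ≤ t → φ x (s + t) = φ x s + φ (x + s) t)
    (hnonneg : ∀ x h, 0 ≤ φ x h) (x : ℝ) : MonotoneOn (φ x) (Ici 0) := by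
  intro s hs t _ hst
  have := hadd x s (t - s) hs (sub_nonneg.mpr hst)
  rw [add_sub_cancel] at this
  linarith [hnonneg (x + s) (t - s)]

theorem le_add_of_dominated
    (hadd : ∀ x s t, 0 ≤ s → 0 ≤ t → φ x (s + t) = φ x s + φ (x + s) t)
    (hdom : ∀ x y h, 0 ≤ h → φ x h ≤ φ y (h + c)) (hc : 0 ≤ c)
    (x y : ℝ) {h : ℝ} (hh : 0 ≤ h) : φ x h ≤ φ y h + φ 0 (c + c) := by
  have := hadd y h c hh hc
  linarith [hdom x y h hh, hdom (y + h) 0 c hc]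

theorem exists_abs_sub_mul_le_of_dominated
    (hadd : ∀ x s t, 0 ≤ s → 0 ≤ t → φ x (s + t) = φ x s + φ (x + s) t)
    (hnonneg : ∀ x h, 0 ≤ φ x h)
    (hdom : ∀ x y h, 0 ≤ h → φ x h ≤ φ y (h + c)) (hc : 0 ≤ c) :
    ∃ d C : ℝ, ∀ x h, 0 ≤ h → |φ x h - d * h| ≤ C := by
  set K := φ 0 (c + c)
  have hshift : ∀ x y h, 0 ≤ h → |φ x h - φ y h| ≤ K := fun x y h hh =>
    abs_sub_le_iff.mpr
      ⟨by linarith [le_add_of_dominated hadd hdom hc x y hh],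
        by linarith [le_add_of_dominated hadd hdom hc y x hh]⟩
  obtain ⟨d, hd⟩ := exists_abs_sub_mul_le_of_quasiAdditive (fun n => φ 0 n) K fun m n => by
    have := hadd 0 m n m.cast_nonneg n.cast_nonneg
    push_cast
    rw [this, zero_add, add_sub_cancel_left]
    exact hshift m 0 n n.cast_nonneg
  refine ⟨d, K + (K + |d|), fun x h hh => ?_⟩
  have h0 := abs_sub_mul_le_of_monotoneOn_of_forall_nat
    (monotoneOn_of_additive_of_nonneg hadd hnonneg 0) hd hh
  calc |φ x h - d * h| ≤ |φ x h - φ 0 h| + |φ 0 h - d * h| := abs_sub_le _ _ _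
    _ ≤ K + (K + |d|) := add_le_add (hshift x 0 h hh) h0

theorem pos_of_abs_sub_mul_le
    (hadd : ∀ x s t, 0 ≤ s → 0 ≤ t → φ x (s + t) = φ x s + φ (x + s) t)
    (hnonneg : ∀ x h, 0 ≤ φ x h)
    (hdom : ∀ x y h, 0 ≤ h → φ x h ≤ φ y (h + c)) (hc : 0 ≤ c)
    {x₀ h₀ : ℝ} (hh₀ : 0 ≤ h₀) (hpos : 0 < φ x₀ h₀)
    {d C : ℝ} (hd : ∀ h, 0 ≤ h → |φ 0 h - d * h| ≤ C) : 0 < d := by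
  set ℓ := h₀ + c
  have hℓ : 0 ≤ ℓ := add_nonneg hh₀ hc
  have hblocks : ∀ n : ℕ, n * φ x₀ h₀ ≤ φ 0 (n * ℓ) := by
    intro n
    induction n with
    | zero => simpa using hnonneg 0 0
    | succ n ih =>
      have := hadd 0 (n * ℓ) ℓ (by positivity) hℓ
      push_cast
      rw [add_one_mul (n : ℝ) ℓ, this]
      linarith [hdom x₀ (0 + n * ℓ) h₀ hh₀]
  obtain ⟨n, hn⟩ := exists_nat_gt (C / φ x₀ h₀)
  have h1 := (abs_le.mp (hd (n * ℓ) (by positivity))).2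
  have h2 : C < n * φ x₀ h₀ := (div_lt_iff₀ hpos).mp hn
  refine pos_of_mul_pos_left (b := n * ℓ) ?_ (by positivity)
  linarith [hblocks n]

theorem exists_uniform_density_of_dominated
    (hadd : ∀ x s t, 0 ≤ s → 0 ≤ t → φ x (s + t) = φ x s + φ (x + s) t)
    (hnonneg : ∀ x h, 0 ≤ φ x h)
    (hdom : ∀ x y h, 0 ≤ h → φ x h ≤ φ y (h + c)) (hc : 0 ≤ c)
    {x₀ h₀ : ℝ} (hh₀ : 0 ≤ h₀) (hpos : 0 < φ x₀ h₀) :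
    ∃ d > (0 : ℝ), ∀ η > (0 : ℝ), ∃ N : ℝ, ∀ x h, N < h → |φ x h / h - d| < η := by
  obtain ⟨d, C, hC⟩ := exists_abs_sub_mul_le_of_dominated hadd hnonneg hdom hc
  have hC0 : 0 ≤ C := (abs_nonneg _).trans (hC 0 0 le_rfl)
  refine ⟨d, pos_of_abs_sub_mul_le hadd hnonneg hdom hc hh₀ hpos (hC 0), fun η hη => ⟨C / η, ?_⟩⟩
  intro x h hh
  have hh0 : 0 < h := (div_nonneg hC0 hη.le).trans_lt hh
  rw [div_lt_iff₀ hη] at hh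
  have hdiv : φ x h / h - d = (φ x h - d * h) / h := by field_simp
  calc |φ x h / h - d| = |φ x h - d * h| / h := by rw [hdiv, abs_div, abs_of_pos hh0]
    _ ≤ C / h := div_le_div_of_nonneg_right (hC x h hh0.le) hh0.le
    _ < η := (div_lt_iff₀ hh0).mpr (by linarith)

end IntervalFunction

noncomputable def countIco (a : ℤ → ℝ) (x h : ℝ) : ℕ :=
  Nat.card (a ⁻¹' Ico x (x + h))

section LocallyFinite

variable {a : ℤ → ℝ} (hfin : ∀ x y : ℝ, {n : ℤ | a n ∈ Icc x y}.Finite)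
include hfin

theorem finite_preimage_Ico (x y : ℝ) : (a ⁻¹' Ico x y).Finite :=
  (hfin x y).subset (preimage_mono Ico_subset_Icc_self)

theorem countIco_add (x : ℝ) {s t : ℝ} (hs : 0 ≤ s) (ht : 0 ≤ t) :
    countIco a x (s + t) = countIco a x s + countIco a (x + s) t := by
  have hIco : Ico x (x + (s + t)) = Ico x (x + s) ∪ Ico (x + s) (x + s + t) := by
    rw [Ico_union_Ico_eq_Ico (by linarith) (by linarith), add_assoc]
  simp only [countIco, Nat.card_coe_set_eq]
  rw [hIco, preimage_union]
  exact ncard_union_eq (Ico_disjoint_Ico_same.preimage a) (finite_preimage_Ico hfin _ _)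
    (finite_preimage_Ico hfin _ _)

theorem countIco_mono {x x' h h' : ℝ} (hx : x' ≤ x) (hxh : x + h ≤ x' + h') :
    countIco a x h ≤ countIco a x' h' := by
  simp only [countIco, Nat.card_coe_set_eq]
  exact ncard_le_ncard (preimage_mono (Ico_subset_Ico hx hxh)) (finite_preimage_Ico hfin _ _)

theorem countIco_le_of_forall_abs_lt {τ ε : ℝ} {σ : ℤ ≃ ℤ} (hσ : ∀ n, |a n + τ - a (σ n)| < ε)
    (x h : ℝ) : countIco a x h ≤ countIco a (x + τ - ε) (h + 2 * ε) := by
  simp only [countIco, Nat.card_coe_set_eq]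
  refine ncard_le_ncard_of_injOn σ (fun n hn => ?_) σ.injective.injOn
    (finite_preimage_Ico hfin _ _)
  obtain ⟨h₁, h₂⟩ := abs_lt.mp (hσ n)
  exact ⟨by linarith [hn.1], by linarith [hn.2]⟩

theorem exists_countIco_le_countIco_add (hap : IsAPSet a) :
    ∃ c ≥ (0 : ℝ), ∀ x y h, countIco a x h ≤ countIco a y (h + c) := by
  obtain ⟨L, hL, hE⟩ := hap 1 one_pos
  refine ⟨L + 2, by linarith, fun x y h => ?_⟩
  obtain ⟨τ, ⟨σ, hσ⟩, hτ₁, hτ₂⟩ := hE (y - x + 1)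
  exact (countIco_le_of_forall_abs_lt hfin hσ x h).trans
    (countIco_mono hfin (by linarith) (by linarith))

theorem countIco_self_pos (n : ℤ) : 0 < countIco a (a n) 1 := by
  simp only [countIco, Nat.card_coe_set_eq]
  exact (ncard_pos (finite_preimage_Ico hfin _ _)).mpr ⟨n, left_mem_Ico.mpr (by linarith)⟩

end LocallyFinite

/-- an almost periodic set has a strictly positive density `d`:
`#(A ∩ I)/l(I) → d` uniformly as the length of the half-interval `I` tends to infinity. -/
theorem ap_set_density (a : ℤ → ℝ)
    (hfin : ∀ x y : ℝ, {n : ℤ | a n ∈ Set.Icc x y}.Finite)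
    (hap : IsAPSet a) :
    ∃ d > (0:ℝ), ∀ η > (0:ℝ), ∃ N : ℝ, ∀ x : ℝ, ∀ h : ℝ, N < h →
      |(Nat.card {n : ℤ | a n ∈ Set.Ico x (x + h)} : ℝ) / h - d| < η := by
  obtain ⟨c, hc, hdom⟩ := exists_countIco_le_countIco_add hfin hap
  exact exists_uniform_density_of_dominated (φ := fun x h => (countIco a x h : ℝ))
    (fun x _ _ hs ht => by exact_mod_cast countIco_add hfin x hs ht)
    (fun _ _ => Nat.cast_nonneg _)
    (fun x y h _ => by exact_mod_cast hdom x y h) hc zero_le_one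
    (by exact_mod_cast countIco_self_pos hfin 0)
end

section
/- Let A = {a_n}_{n∈ℤ} ⊂ ℝ be an almost periodic set of density d, indexed so that a_n ≤ a_{n+1} for all n ∈ ℤ. Then a_n = n/d + φ(n) for all n, where φ : ℤ → ℝ is an almost periodic (Bohr) mapping on ℤ. -/
/-- A mapping `φ : ℤ → ℝ` is almost periodic (Bohr): for every `ε > 0` its set of
`ε`-almost periods is relatively dense in `ℤ`. -/
def IsAPMap (φ : ℤ → ℝ) : Prop :=
  ∀ ε > (0:ℝ), ∃ L : ℤ, 0 < L ∧ ∀ m : ℤ, ∃ h : ℤ, m ≤ h ∧ h ≤ m + L ∧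
    ∀ n : ℤ, |φ (n + h) - φ n| < ε

open Set Filter Topology

theorem le_mul_of_forall_le_sub {f : ℝ → ℝ} {d s h : ℝ}
    (hf : ∀ η > 0, ∃ C, ∀ y, |f y - d * y| ≤ η * |y| + C) (hstep : ∀ x, h ≤ f (x + s) - f x) :
    h ≤ d * s := by
  have hiter : ∀ k : ℕ, k * h ≤ f (k * s) - f 0 := by
    intro k
    induction k with
    | zero => simp
    | succ k ih =>
      have := hstep (k * s)
      push_cast
      rw [add_one_mul, add_one_mul]
      linarith
  refine le_of_forall_pos_le_add fun ε hε => ?_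
  obtain ⟨C, hC⟩ := hf (ε / (|s| + 1)) (by positivity)
  have hηs : ε / (|s| + 1) * |s| ≤ ε := by
    rw [div_mul_eq_mul_div, div_le_iff₀ (by positivity)]
    nlinarith [abs_nonneg s]
  have hk : ∀ k : ℕ, 1 ≤ k → h ≤ d * s + ε + 2 * C / k := by
    intro k hk
    have hkpos : (0 : ℝ) < k := by exact_mod_cast hk
    have hks := abs_le.1 (hC (k * s))
    have h0 := abs_le.1 (hC 0)
    rw [abs_mul, Nat.abs_cast] at hks
    simp only [abs_zero, mul_zero, zero_add, sub_zero] at h0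
    have hkε := mul_le_mul_of_nonneg_left hηs hkpos.le
    rw [← sub_nonneg, show d * s + ε + 2 * C / k - h = (k * (d * s + ε) + 2 * C - k * h) / k by
      field_simp]
    refine div_nonneg ?_ hkpos.le
    linarith [hiter k]
  have hlim : Tendsto (fun k : ℕ => d * s + ε + 2 * C / k) atTop (𝓝 (d * s + ε)) := by
    simpa using (tendsto_const_div_atTop_nhds_zero_nat (2 * C)).const_add (d * s + ε)
  exact ge_of_tendsto hlim (eventually_atTop.2 ⟨1, hk⟩)

theorem mul_le_of_forall_sub_le {f : ℝ → ℝ} {d s h : ℝ}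
    (hf : ∀ η > 0, ∃ C, ∀ y, |f y - d * y| ≤ η * |y| + C) (hstep : ∀ x, f (x + s) - f x ≤ h) :
    d * s ≤ h := by
  have := le_mul_of_forall_le_sub (f := -f) (d := -d) (h := -h)
    (fun η hη => (hf η hη).imp fun C hC y => by
      rw [Pi.neg_apply, neg_mul, neg_sub_neg, abs_sub_comm]
      exact hC y)
    (fun x => by simp only [Pi.neg_apply]; linarith [hstep x])
  linarith

def IsLastIndexBelow (a : ℤ → ℝ) (G : ℝ → ℤ) : Prop :=
  ∀ x k, a k < x ↔ k ≤ G x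

theorem exists_isLastIndexBelow {a : ℤ → ℝ} (hmono : Monotone a)
    (hbelow : ∀ x, ∃ n, a n < x) (habove : ∀ x, ∃ n, x ≤ a n) :
    ∃ G, IsLastIndexBelow a G := by
  have hmax : ∀ x, ∃ g : ℤ, a g < x ∧ ∀ k, a k < x → k ≤ g := fun x =>
    Int.exists_greatest_of_bdd
      (let ⟨n, hn⟩ := habove x
       ⟨n, fun k hk => le_of_lt (hmono.reflect_lt (hk.trans_le hn))⟩)
      (hbelow x)
  choose G hG using hmax
  exact ⟨G, fun x k => ⟨(hG x).2 k, fun hk => (hmono hk).trans_lt (hG x).1⟩⟩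

namespace IsLastIndexBelow

variable {a : ℤ → ℝ} {G : ℝ → ℤ}

theorem monotone (hG : IsLastIndexBelow a G) : Monotone G := fun x y hxy =>
  (hG y _).1 (((hG x _).2 le_rfl).trans_le hxy)

theorem le_apply_add (hG : IsLastIndexBelow a G) (n : ℤ) {t : ℝ} (ht : 0 < t) :
    n ≤ G (a n + t) :=
  (hG _ n).1 (lt_add_of_pos_right _ ht)

theorem apply_sub_lt (hG : IsLastIndexBelow a G) (n : ℤ) {t : ℝ} (ht : 0 ≤ t) :
    G (a n - t) < n :=
  not_le.1 fun h => ((hG _ n).2 h).not_ge (sub_le_self _ ht)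

theorem apply_mem_Ico_iff (hG : IsLastIndexBelow a G) {x y : ℝ} {n : ℤ} :
    a n ∈ Ico x y ↔ n ∈ Ioc (G x) (G y) :=
  and_congr (by rw [← not_lt, hG, not_le]) (hG y n)

theorem setOf_mem_Ico (hG : IsLastIndexBelow a G) (x y : ℝ) :
    {n | a n ∈ Ico x y} = Ioc (G x) (G y) :=
  Set.ext fun _ => hG.apply_mem_Ico_iff

end IsLastIndexBelow

def HasUniformDensity (a : ℤ → ℝ) (d : ℝ) : Prop :=
  ∀ η > (0:ℝ), ∃ N : ℝ, ∀ x : ℝ, ∀ h : ℝ, N < h →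
    |(Nat.card {n : ℤ | a n ∈ Ico x (x + h)} : ℝ) / h - d| < η

namespace HasUniformDensity

variable {a : ℤ → ℝ} {d : ℝ}

theorem exists_mem_Ico (hdens : HasUniformDensity a d) (hd : 0 < d) :
    ∃ H, ∀ x, ∃ n, a n ∈ Ico x (x + H) := by
  obtain ⟨N, hN⟩ := hdens d hd
  refine ⟨max N 0 + 1, fun x => ?_⟩
  by_contra! hempty
  have := hN x (max N 0 + 1) (by linarith [le_max_left N 0])
  simp [hempty, abs_of_pos hd] at this

theorem exists_isLastIndexBelow (hdens : HasUniformDensity a d) (hd : 0 < d)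
    (hmono : Monotone a) : ∃ G, IsLastIndexBelow a G := by
  obtain ⟨H, hH⟩ := hdens.exists_mem_Ico hd
  exact _root_.exists_isLastIndexBelow hmono
    (fun x => (hH (x - H)).imp fun _ hn => by linarith [hn.2])
    (fun x => (hH x).imp fun _ hn => hn.1)

end HasUniformDensity

namespace IsLastIndexBelow

variable {a : ℤ → ℝ} {G : ℝ → ℤ}

theorem natCard_setOf_mem_Ico (hG : IsLastIndexBelow a G) {x y : ℝ} (hxy : x ≤ y) :
    (Nat.card {n | a n ∈ Ico x y} : ℝ) = G y - G x := by
  rw [hG.setOf_mem_Ico, Nat.card_coe_set_eq, ← Finset.coe_Ioc, ncard_coe_finset, Int.card_Ioc,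
    ← Int.cast_natCast, Int.toNat_of_nonneg (sub_nonneg.2 (hG.monotone hxy)), Int.cast_sub]

theorem exists_abs_sub_sub_mul_le (hG : IsLastIndexBelow a G) {d : ℝ}
    (hdens : HasUniformDensity a d) {η : ℝ} (hη : 0 < η) :
    ∃ C, ∀ x y, x ≤ y → |(G y - G x : ℝ) - d * (y - x)| ≤ η * (y - x) + C := by
  obtain ⟨N, hN⟩ := hdens η hη
  set N' := max N 0 + 1
  have hNN' : N < N' := by linarith [le_max_left N 0]
  have hN'pos : 0 < N' := by linarith [le_max_right N 0]
  have hlong : ∀ x y, N' ≤ y - x → |(G y - G x : ℝ) - d * (y - x)| < η * (y - x) := by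
    intro x y hxy
    have hpos : 0 < y - x := hN'pos.trans_le hxy
    have := hN x (y - x) (hNN'.trans_le hxy)
    rw [add_sub_cancel, hG.natCard_setOf_mem_Ico (sub_pos.1 hpos).le] at this
    rw [show (G y - G x : ℝ) - d * (y - x) = ((G y - G x) / (y - x) - d) * (y - x) by
      field_simp, abs_mul, abs_of_pos hpos]
    exact mul_lt_mul_of_pos_right this hpos
  refine ⟨(2 * |d| + η) * N', fun x y hxy => ?_⟩
  rcases le_or_gt N' (y - x) with hyx | hyx
  · exact (hlong x y hyx).le.trans (le_add_of_nonneg_right (by positivity))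
  have hGxy : (G x : ℝ) ≤ G y := by exact_mod_cast hG.monotone hxy
  have hGy : (G y : ℝ) ≤ G (x + N') := by exact_mod_cast hG.monotone (by linarith)
  have hwin := abs_lt.1 (hlong x (x + N') (by linarith))
  have hdyx : |d * (y - x)| ≤ |d| * N' := by
    rw [abs_mul, abs_of_nonneg (sub_nonneg.2 hxy)]
    gcongr
  have hdN' : |d * N'| ≤ |d| * N' := by rw [abs_mul, abs_of_pos hN'pos]
  rw [add_sub_cancel_left] at hwin
  obtain ⟨h1, h2⟩ := abs_le.1 hdyx
  obtain ⟨h3, h4⟩ := abs_le.1 hdN'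
  have hη' := mul_nonneg hη.le (sub_nonneg.2 hxy)
  have hηN' := mul_pos hη hN'pos
  rw [abs_le]
  constructor <;> linarith

theorem exists_abs_sub_mul_le (hG : IsLastIndexBelow a G) {d : ℝ}
    (hdens : HasUniformDensity a d) {η : ℝ} (hη : 0 < η) :
    ∃ C, ∀ y, |(G y : ℝ) - d * y| ≤ η * |y| + C := by
  obtain ⟨C, hC⟩ := hG.exists_abs_sub_sub_mul_le hdens hη
  refine ⟨C + |(G 0 : ℝ)|, fun y => ?_⟩
  have hG0 := neg_abs_le (G 0 : ℝ)
  have hG0' := le_abs_self (G 0 : ℝ)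
  rcases le_total 0 y with hy | hy
  · have := abs_le.1 (hC 0 y hy)
    rw [abs_of_nonneg hy, abs_le]
    constructor <;> linarith
  · have := abs_le.1 (hC y 0 hy)
    rw [abs_of_nonpos hy, abs_le]
    constructor <;> linarith

theorem sub_le_sub_of_perm (hG : IsLastIndexBelow a G) {σ : ℤ ≃ ℤ} {τ δ : ℝ}
    (hσ : ∀ n, |a n + τ - a (σ n)| < δ) {x y x' y' : ℝ} (hxy : x ≤ y)
    (hx : x' + δ ≤ x + τ) (hy : y + τ + δ ≤ y') :
    G y - G x ≤ G y' - G x' := by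
  have hδ : 0 ≤ δ := (abs_nonneg _).trans (hσ 0).le
  have hmaps : ∀ n ∈ Finset.Ioc (G x) (G y), σ n ∈ Finset.Ioc (G x') (G y') := by
    intro n hn
    rw [Finset.mem_Ioc, ← mem_Ioc, ← hG.apply_mem_Ico_iff] at hn ⊢
    obtain ⟨h1, h2⟩ := abs_lt.1 (hσ n)
    constructor <;> linarith [hn.1, hn.2]
  have hcard := Finset.card_le_card_of_injOn σ hmaps σ.injective.injOn
  rw [Int.card_Ioc, Int.card_Ioc] at hcard
  have := hG.monotone (show x' ≤ y' by linarith)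
  omega

theorem exists_shift (hG : IsLastIndexBelow a G) {σ : ℤ ≃ ℤ} {τ δ : ℝ}
    (hσ : ∀ n, |a n + τ - a (σ n)| < δ) :
    ∃ h : ℤ, ∀ n, |a (n + h) - a n - τ| ≤ 5 * δ := by
  have hδ : 0 < δ := (abs_nonneg _).trans_lt (hσ 0)
  have hσ' : ∀ n, |a n + -τ - a (σ.symm n)| < δ := fun n => by
    rw [← abs_neg]
    convert hσ (σ.symm n) using 2
    rw [Equiv.apply_symm_apply]
    ring
  -- every lower bound `G (a m + τ - 5δ) + 1 - m` for the shift lies below every upper bound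
  have hpair : ∀ m n : ℤ, G (a m + τ - 5 * δ) + 1 - m ≤ G (a n + τ + 5 * δ) - n := by
    intro m n
    have hm := hG.apply_sub_lt m (t := 4 * δ) (by positivity)
    rcases le_or_gt (a m) (a n + 8 * δ) with hmn | hmn
    · have := hG.sub_le_sub_of_perm hσ (x := a m - 4 * δ) (y := a n + 4 * δ)
        (x' := a m + τ - 5 * δ) (y' := a n + τ + 5 * δ) (by linarith) (by linarith) (by linarith)
      have hn := hG.le_apply_add n (t := 4 * δ) (by positivity)
      omega
    · have := hG.sub_le_sub_of_perm hσ' (x := a n + τ + 3 * δ) (y := a m + τ - 5 * δ)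
        (x' := a n + 2 * δ) (y' := a m - 4 * δ) (by linarith) (by linarith) (by linarith)
      have hn := hG.le_apply_add n (t := 2 * δ) (by positivity)
      have := hG.monotone (show a n + τ + 3 * δ ≤ a n + τ + 5 * δ by linarith)
      omega
  obtain ⟨h, ⟨m, hm⟩, hmax⟩ := Int.exists_greatest_of_bdd
    (P := fun z => ∃ m, z = G (a m + τ - 5 * δ) + 1 - m)
    ⟨G (a 0 + τ + 5 * δ), by rintro _ ⟨m, rfl⟩; linarith [hpair m 0]⟩ ⟨_, 0, rfl⟩
  refine ⟨h, fun n => abs_le.2 ⟨?_, ?_⟩⟩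
  · have : ¬ n + h ≤ G (a n + τ - 5 * δ) := by
      have := hmax _ ⟨n, rfl⟩
      omega
    rw [← hG] at this
    linarith
  · have := (hG _ _).2 (show n + h ≤ G (a n + τ + 5 * δ) by linarith [hpair m n])
    linarith

theorem sub_le_and_le_sub_of_shift (hG : IsLastIndexBelow a G) {h : ℤ} {τ c : ℝ}
    (hh : ∀ n, |a (n + h) - a n - τ| ≤ c) (x : ℝ) :
    G (x + (τ - c)) - G x ≤ h ∧ h ≤ G (x + (τ + c)) - G x := by
  constructor
  · have hm := (hG _ _).2 (le_refl (G (x + (τ - c))))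
    have := (abs_le.1 (hh (G (x + (τ - c)) - h))).1
    rw [sub_add_cancel] at this
    have := (hG x _).1 (show a (G (x + (τ - c)) - h) < x by linarith)
    omega
  · have hn := (hG x _).2 le_rfl
    have := (abs_le.1 (hh (G x))).2
    have := (hG _ _).1 (show a (G x + h) < x + (τ + c) by linarith)
    omega

theorem abs_div_sub_le_of_shift (hG : IsLastIndexBelow a G) {d : ℝ} (hd : 0 < d)
    (hdens : HasUniformDensity a d) {h : ℤ} {τ c : ℝ} (hh : ∀ n, |a (n + h) - a n - τ| ≤ c) :
    |h / d - τ| ≤ c := by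
  have hf : ∀ η > 0, ∃ C, ∀ y, |(G y : ℝ) - d * y| ≤ η * |y| + C := fun η hη =>
    hG.exists_abs_sub_mul_le hdens hη
  have hlo := mul_le_of_forall_sub_le (s := τ - c) (h := h) hf fun x => by
    exact_mod_cast (hG.sub_le_and_le_sub_of_shift hh x).1
  have hhi := le_mul_of_forall_le_sub (s := τ + c) (h := h) hf fun x => by
    exact_mod_cast (hG.sub_le_and_le_sub_of_shift hh x).2
  rw [abs_le, le_sub_iff_add_le, sub_le_iff_le_add, le_div_iff₀ hd, div_le_iff₀ hd]
  constructor <;> linarith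

end IsLastIndexBelow

theorem exists_int_window_of_relativelyDense {E : Set ℝ} (hE : RelativelyDense E) {d c : ℝ}
    (hd : 0 < d) {P : ℤ → Prop} (hP : ∀ τ ∈ E, ∃ h : ℤ, |h / d - τ| ≤ c ∧ P h) :
    ∃ L : ℤ, 0 < L ∧ ∀ m : ℤ, ∃ h : ℤ, m ≤ h ∧ h ≤ m + L ∧ P h := by
  obtain ⟨L₀, hL₀, hE⟩ := hE
  refine ⟨max 1 ⌈d * (L₀ + 2 * c)⌉, lt_max_of_lt_left one_pos, fun m => ?_⟩
  obtain ⟨τ, hτE, hτ⟩ := hE (m / d + c)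
  obtain ⟨h, hh, hPh⟩ := hP τ hτE
  obtain ⟨hh1, hh2⟩ := abs_le.1 hh
  have hlo : (m : ℝ) / d < h / d := by linarith [hτ.1]
  have hhi : (h : ℝ) / d < (m + d * (L₀ + 2 * c)) / d := by
    rw [add_div, mul_div_cancel_left₀ _ hd.ne']
    linarith [hτ.2]
  rw [div_lt_div_iff_of_pos_right hd] at hlo hhi
  refine ⟨h, by exact_mod_cast hlo.le, ?_, hPh⟩
  have : h ≤ m + ⌈d * (L₀ + 2 * c)⌉ := by
    have := Int.le_ceil (d * (L₀ + 2 * c))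
    exact_mod_cast (show (h : ℝ) ≤ m + ⌈d * (L₀ + 2 * c)⌉ by linarith)
  linarith [le_max_right 1 ⌈d * (L₀ + 2 * c)⌉]

theorem ap_set_representation_general (a : ℤ → ℝ)
    (hap : IsAPSet a)
    (hmono : ∀ n : ℤ, a n ≤ a (n + 1))
    (d : ℝ) (hd : 0 < d)
    (hdens : ∀ η > (0:ℝ), ∃ N : ℝ, ∀ x : ℝ, ∀ h : ℝ, N < h →
      |(Nat.card {n : ℤ | a n ∈ Set.Ico x (x + h)} : ℝ) / h - d| < η) :
    ∃ φ : ℤ → ℝ, IsAPMap φ ∧ ∀ n : ℤ, a n = n / d + φ n := by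
  obtain ⟨G, hG⟩ :=
    HasUniformDensity.exists_isLastIndexBelow hdens hd (monotone_int_of_le_succ hmono)
  refine ⟨fun n => a n - n / d, fun ε hε => ?_, fun n => by ring⟩
  obtain ⟨δ, hδ, hδε⟩ : ∃ δ, 0 < δ ∧ 10 * δ < ε := ⟨ε / 11, by positivity, by linarith⟩
  obtain ⟨L, hL, hwin⟩ := exists_int_window_of_relativelyDense (hap δ hδ) hd
    (c := 5 * δ) (P := fun h => ∀ n, |a (n + h) - ((n + h : ℤ) : ℝ) / d - (a n - n / d)| < ε)
    fun τ ⟨σ, hσ⟩ => by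
      obtain ⟨h, hh⟩ := hG.exists_shift hσ
      have hhd := hG.abs_div_sub_le_of_shift hd hdens hh
      refine ⟨h, hhd, fun n => ?_⟩
      calc |a (n + h) - ((n + h : ℤ) : ℝ) / d - (a n - n / d)|
          = |(a (n + h) - a n - τ) - (h / d - τ)| := by push_cast; congr 1; ring
        _ ≤ 5 * δ + 5 * δ := (abs_sub _ _).trans (add_le_add (hh n) hhd)
        _ < ε := by linarith
  exact ⟨L, hL, hwin⟩

/-- a monotone enumeration of an almost periodic set of density `d`
has the form `a n = n/d + φ(n)` with `φ : ℤ → ℝ` almost periodic. -/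
theorem ap_set_representation (a : ℤ → ℝ)
    (hfin : ∀ x y : ℝ, {n : ℤ | a n ∈ Set.Icc x y}.Finite)
    (hap : IsAPSet a)
    (hmono : ∀ n : ℤ, a n ≤ a (n + 1))
    (d : ℝ) (hd : 0 < d)
    (hdens : ∀ η > (0:ℝ), ∃ N : ℝ, ∀ x : ℝ, ∀ h : ℝ, N < h →
      |(Nat.card {n : ℤ | a n ∈ Set.Ico x (x + h)} : ℝ) / h - d| < η) :
    ∃ φ : ℤ → ℝ, IsAPMap φ ∧ ∀ n : ℤ, a n = n / d + φ n :=
  ap_set_representation_general a hap hmono d hd hdens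
end

section
/- Let d > 0 and φ : ℤ → ℝ be bounded, and set a_n = n/d + φ(n), assuming a_n ≠ 0 for all n ∈ ℤ. Then the limit lim_{N→∞} Σ_{|a_n| < N} 1/a_n exists and is finite. -/
/-!
Pair `n` with `-n`: since `a n + a (-n) = φ n + φ (-n)` is bounded while `|a (±n)| ≥ |n| / (2d)`
for large `n`, the pair `1 / a n + 1 / a (-n)` is `O(1 / n²)`, so the symmetric partial sums over
`|n| ≤ K` converge. The set `{n | |a n| < N}` is squeezed between the blocks `|n| < d (N - C)` and
`|n| ≤ d (N + C)`; the `O(d C)` indices in between contribute terms of size at most `1 / N`.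
-/

open Filter Topology Finset SummationFilter

theorem abs_inv_add_inv_le {x y r c : ℝ} (hr : 0 < r) (hx : r ≤ |x|) (hy : r ≤ |y|)
    (hxy : |x + y| ≤ c) : |x⁻¹ + y⁻¹| ≤ c / r ^ 2 := by
  have hx0 : x ≠ 0 := abs_pos.mp (hr.trans_le hx)
  have hy0 : y ≠ 0 := abs_pos.mp (hr.trans_le hy)
  rw [inv_add_inv hx0 hy0, abs_div, abs_mul, sq]
  exact div_le_div₀ ((abs_nonneg _).trans hxy) hxy (by positivity)
    (mul_le_mul hx hy hr.le (abs_nonneg _))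

theorem hasSum_symmetricIcc_of_hasSum_nat_add_neg {E : Type*} [AddCommGroup E]
    [TopologicalSpace E] [IsTopologicalAddGroup E] {f : ℤ → E} {s : E}
    (hf : HasSum (fun n : ℕ ↦ f n + f (-n)) s) : HasSum f (s - f 0) (symmetricIcc ℤ) := by
  have hsum (N : ℕ) :
      ∑ n ∈ Icc (-(N : ℤ)) N, f n = ∑ n ∈ range (N + 1), (f n + f (-n)) - f 0 := by
    induction N with
    | zero => simp
    | succ N ih =>
      rw [Nat.cast_succ, sum_Icc_succ_eq_add_endpoints, ih, sum_range_succ _ (N + 1)]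
      push_cast
      abel
  rw [hasSum_symmetricIcc_iff]
  simpa only [hsum, Function.comp_def] using
    (hf.tendsto_sum_nat.comp (tendsto_add_atTop_nat 1)).sub_const (f 0)

theorem tendsto_sum_filter_of_tendsto_sum {ι α E : Type*} [SeminormedAddCommGroup E]
    {l : Filter α} {f : ι → E} {s : E} {U : α → Finset ι} {p : α → ι → Prop}
    [∀ x, DecidablePred (p x)] {ε : α → ℝ} {M : ℝ}
    (hU : Tendsto (fun x ↦ ∑ i ∈ U x, f i) l (𝓝 s))
    (hcard : ∀ᶠ x in l, (#((U x).filter fun i ↦ ¬p x i) : ℝ) ≤ M)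
    (hsmall : ∀ᶠ x in l, ∀ i ∈ U x, ¬p x i → ‖f i‖ ≤ ε x)
    (hε : Tendsto ε l (𝓝 0)) :
    Tendsto (fun x ↦ ∑ i ∈ (U x).filter (p x), f i) l (𝓝 s) := by
  have hrest : Tendsto (fun x ↦ ∑ i ∈ (U x).filter (fun i ↦ ¬p x i), f i) l (𝓝 0) := by
    refine squeeze_zero_norm' ?_ (by simpa using hε.abs.const_mul M)
    filter_upwards [hcard, hsmall] with x hcard hsmall
    calc ‖∑ i ∈ (U x).filter (fun i ↦ ¬p x i), f i‖
        ≤ ∑ i ∈ (U x).filter (fun i ↦ ¬p x i), |ε x| := by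
          refine (norm_sum_le _ _).trans (sum_le_sum fun i hi ↦ ?_)
          exact (hsmall i (mem_filter.1 hi).1 (mem_filter.1 hi).2).trans (le_abs_self _)
      _ = #((U x).filter fun i ↦ ¬p x i) * |ε x| := by rw [sum_const, nsmul_eq_mul]
      _ ≤ M * |ε x| := mul_le_mul_of_nonneg_right hcard (abs_nonneg _)
  have hsplit (x : α) : ∑ i ∈ (U x).filter (p x), f i
      = ∑ i ∈ U x, f i - ∑ i ∈ (U x).filter (fun i ↦ ¬p x i), f i :=
    eq_sub_of_add_eq (sum_filter_add_sum_filter_not _ _ _)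
  simpa only [hsplit, sub_zero] using hU.sub hrest

section PerturbedLattice

variable {d C : ℝ} {a : ℤ → ℝ}

theorem abs_abs_sub_abs_div_le (hd : 0 < d) (ha : ∀ n : ℤ, |a n - n / d| ≤ C) (n : ℤ) :
    |(|a n| - |(n : ℝ)| / d)| ≤ C := by
  have h := abs_abs_sub_abs_le_abs_sub (a n) (n / d)
  rw [abs_div, abs_of_pos hd] at h
  exact h.trans (ha n)

theorem abs_div_two_mul_le_abs (hd : 0 < d) (ha : ∀ n : ℤ, |a n - n / d| ≤ C) {n : ℤ}
    (hn : 2 * d * C ≤ |(n : ℝ)|) : |(n : ℝ)| / (2 * d) ≤ |a n| := by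
  have hC : C ≤ |(n : ℝ)| / (2 * d) := by rw [le_div_iff₀ (by positivity)]; linarith
  have hhalf : |(n : ℝ)| / d = 2 * (|(n : ℝ)| / (2 * d)) := by field_simp
  linarith [(abs_le.mp (abs_abs_sub_abs_div_le hd ha n)).1]

theorem abs_add_neg_le (ha : ∀ n : ℤ, |a n - n / d| ≤ C) (n : ℤ) : |a n + a (-n)| ≤ 2 * C :=
  calc |a n + a (-n)| = |(a n - n / d) + (a (-n) - ((-n : ℤ) : ℝ) / d)| := by
        push_cast; ring_nf
    _ ≤ C + C := (abs_add_le _ _).trans (add_le_add (ha n) (ha (-n)))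
    _ = 2 * C := by ring

theorem summable_inv_add_inv_neg (hd : 0 < d) (ha : ∀ n : ℤ, |a n - n / d| ≤ C) :
    Summable fun n : ℕ ↦ (a n)⁻¹ + (a (-n))⁻¹ := by
  refine Summable.of_norm_bounded_eventually_nat
    ((Real.summable_nat_pow_inv.mpr one_lt_two).mul_left (8 * C * d ^ 2)) ?_
  filter_upwards [eventually_ge_atTop ⌈2 * d * C⌉₊, eventually_ge_atTop 1] with n hnC hn
  have hn' : 2 * d * C ≤ |((n : ℤ) : ℝ)| := by simpa using Nat.ceil_le.mp hnC
  have hr : 0 < (n : ℝ) / (2 * d) := by positivity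
  have hpos := abs_div_two_mul_le_abs hd ha hn'
  have hneg := abs_div_two_mul_le_abs hd ha (n := -n) (by simpa using hn')
  simp only [Int.cast_neg, abs_neg, Int.cast_natCast, Nat.abs_cast] at hpos hneg
  calc ‖(a n)⁻¹ + (a (-n))⁻¹‖ ≤ 2 * C / ((n : ℝ) / (2 * d)) ^ 2 :=
        abs_inv_add_inv_le hr hpos hneg (abs_add_neg_le ha n)
    _ = 8 * C * d ^ 2 * ((n : ℝ) ^ 2)⁻¹ := by field_simp; ring

theorem setOf_abs_lt_eq_filter_Icc (hd : 0 < d) (ha : ∀ n : ℤ, |a n - n / d| ≤ C) (x : ℝ) :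
    {n : ℤ | |a n| < x} = ↑((Icc (-⌈d * (x + C)⌉) ⌈d * (x + C)⌉).filter fun n ↦ |a n| < x) := by
  ext n
  simp only [Set.mem_ofPred_eq, coe_filter, mem_Icc]
  refine ⟨fun h ↦ ⟨abs_le.mp ?_, h⟩, fun h ↦ h.2⟩
  have hn : |(n : ℝ)| / d < x + C := by linarith [(abs_le.mp (abs_abs_sub_abs_div_le hd ha n)).1]
  rw [div_lt_iff₀ hd] at hn
  exact_mod_cast (show ((|n| : ℤ) : ℝ) ≤ ⌈d * (x + C)⌉ by
    push_cast; linarith [Int.le_ceil (d * (x + C))])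

theorem card_filter_le_abs_le (hd : 0 < d) (ha : ∀ n : ℤ, |a n - n / d| ≤ C) {x : ℝ}
    (hx : C < x) :
    (#((Icc (-⌈d * (x + C)⌉) ⌈d * (x + C)⌉).filter fun n ↦ x ≤ |a n|) : ℝ) ≤ 4 * d * C + 4 := by
  have hC : 0 ≤ C := (abs_nonneg _).trans (ha 0)
  set K := ⌈d * (x + C)⌉
  set J := ⌈d * (x - C)⌉ - 1
  have hK : (K : ℝ) < d * (x + C) + 1 := Int.ceil_lt_add_one _
  have hJ : d * (x - C) - 1 ≤ J := by push_cast [J]; linarith [Int.le_ceil (d * (x - C))]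
  have hJ' : (J : ℝ) < d * (x - C) := by
    push_cast [J]; linarith [Int.ceil_lt_add_one (d * (x - C))]
  have hJ0 : 0 ≤ J := by
    have := Int.ceil_pos.mpr (mul_pos hd (sub_pos.mpr hx)); omega
  have hJK : J ≤ K := by
    have := Int.ceil_mono (show d * (x - C) ≤ d * (x + C) by nlinarith); omega
  -- `|n| ≤ J` forces `|a n| < x`, so only indices outside `Icc (-J) J` are counted.
  have hsub : (Icc (-K) K).filter (fun n ↦ x ≤ |a n|) ⊆ Icc (-K) K \ Icc (-J) J := by
    intro n hn
    rw [mem_filter] at hn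
    refine mem_sdiff.mpr ⟨hn.1, fun hnJ ↦ hn.2.not_gt ?_⟩
    have hnJ' : |(n : ℝ)| ≤ J := by
      rw [← Int.cast_abs]; exact_mod_cast abs_le.mpr (mem_Icc.mp hnJ)
    have hn : |(n : ℝ)| / d < x - C := by rw [div_lt_iff₀ hd]; linarith
    linarith [(abs_le.mp (abs_abs_sub_abs_div_le hd ha n)).2]
  have hcard : (#(Icc (-K) K \ Icc (-J) J) : ℤ) = 2 * (K - J) := by
    rw [card_sdiff_of_subset (Icc_subset_Icc (by omega) hJK), Int.card_Icc, Int.card_Icc]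
    omega
  calc (#((Icc (-K) K).filter fun n ↦ x ≤ |a n|) : ℝ) ≤ #(Icc (-K) K \ Icc (-J) J) := by
        exact_mod_cast card_le_card hsub
    _ = 2 * ((K : ℝ) - J) := by exact_mod_cast hcard
    _ ≤ 4 * d * C + 4 := by nlinarith

end PerturbedLattice

theorem sum_reciprocal_zeros_converges_general (d : ℝ) (hd : 0 < d) (φ : ℤ → ℝ)
    (C : ℝ) (hφ : ∀ n : ℤ, |φ n| ≤ C)
    (a : ℤ → ℝ) (ha : ∀ n : ℤ, a n = n / d + φ n) :
    ∃ l : ℝ, Tendsto (fun N : ℕ => ∑ᶠ n ∈ {n : ℤ | |a n| < (N : ℝ)}, (a n)⁻¹)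
      atTop (nhds l) := by
  have hclose (n : ℤ) : |a n - n / d| ≤ C := by rw [ha n, add_sub_cancel_left]; exact hφ n
  obtain ⟨l, hl⟩ : ∃ l, HasSum (fun n ↦ (a n)⁻¹) l (symmetricIcc ℤ) :=
    ⟨_, hasSum_symmetricIcc_of_hasSum_nat_add_neg (summable_inv_add_inv_neg hd hclose).hasSum⟩
  rw [HasSum, symmetricIcc_filter, tendsto_map'_iff] at hl
  have hN : Tendsto (fun N : ℕ ↦ (N : ℝ)) atTop atTop := tendsto_natCast_atTop_atTop
  have hK : Tendsto (fun N : ℕ ↦ ⌈d * ((N : ℝ) + C)⌉) atTop atTop :=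
    tendsto_ceil_atTop.comp ((tendsto_atTop_add_const_right _ C hN).const_mul_atTop hd)
  have hU : Tendsto (fun N : ℕ ↦ ∑ n ∈ Icc (-⌈d * (N + C)⌉) ⌈d * (N + C)⌉, (a n)⁻¹)
      atTop (𝓝 l) := hl.comp hK
  have hcard : ∀ᶠ N : ℕ in atTop,
      (#((Icc (-⌈d * (N + C)⌉) ⌈d * (N + C)⌉).filter fun n ↦ ¬|a n| < N) : ℝ)
        ≤ 4 * d * C + 4 := by
    filter_upwards [hN.eventually_gt_atTop C] with N hNC
    simpa only [not_lt] using card_filter_le_abs_le hd hclose hNC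
  have hsmall : ∀ᶠ N : ℕ in atTop, ∀ n, ¬|a n| < N → ‖(a n)⁻¹‖ ≤ (N : ℝ)⁻¹ := by
    filter_upwards [hN.eventually_gt_atTop 0] with N hN0 n hn
    rw [norm_inv]
    exact inv_anti₀ hN0 (not_lt.mp hn)
  refine ⟨l, (tendsto_sum_filter_of_tendsto_sum hU hcard
    (hsmall.mono fun N h n _ ↦ h n) (tendsto_inv_atTop_zero.comp hN)).congr fun N ↦ ?_⟩
  rw [setOf_abs_lt_eq_filter_Icc hd hclose, finsum_mem_coe_finset]

/-- for `a n = n/d + φ(n)` with `d > 0`, `φ` bounded and `0 ∉ {a n}`,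
the limit `lim_{N→∞} Σ_{|a n| < N} 1/a n` exists and is finite. -/
theorem sum_reciprocal_zeros_converges (d : ℝ) (hd : 0 < d) (φ : ℤ → ℝ)
    (C : ℝ) (hφ : ∀ n : ℤ, |φ n| ≤ C)
    (a : ℤ → ℝ) (ha : ∀ n : ℤ, a n = n / d + φ n)
    (h0 : ∀ n : ℤ, a n ≠ 0) :
    ∃ l : ℝ, Tendsto (fun N : ℕ => ∑ᶠ n ∈ {n : ℤ | |a n| < (N : ℝ)}, (a n)⁻¹)
      atTop (nhds l) :=
  sum_reciprocal_zeros_converges_general d hd φ C hφ a ha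
end

section
/- Let Γ ⊂ ℝ₊ be countable with coefficients b_γ ∈ ℂ satisfying Σ_{0<γ<1}|b_γ| < ∞, and define g(z) = Σ_{γ∈Γ, 0<γ<1} b_γ (e^{2πiγz} − 1)/γ. Then g is a well-defined entire function, and |g(z)| = o(|z|) as |z| → ∞ within the closed upper half-plane ∪ ℝ; moreover, in every horizontal strip {|Im z| < M} one has |g(z) − g(Re z)| ≤ C(M) for a constant C(M) depending only on M (and the b_γ). -/
/-! Write `φ_γ(z) = (e^{2πiγz} - 1)/γ`, so that `g = Σ b_γ φ_γ`. On the closed upper half-plane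
`|e^{2πiγz}| ≤ 1`, whence `|φ_γ(z)| ≤ min (2π|z|) (2/γ)`: the first bound dominates `φ_γ(z)/z`
uniformly in `γ`, the second makes each single term `o(|z|)`, and dominated convergence for series
(Tannery's theorem) gives `g(z) = o(|z|)`. For `γ ≤ 1` the bound `|φ_γ(z)| ≤ 2π|z| e^{2π|z|}` is
uniform on compact sets, so the series is entire, and the addition formula
`φ_γ(x + iy) - φ_γ(x) = e^{2πiγx} φ_γ(iy)` gives the bound in horizontal strips. -/

open Real Complex Filter Topology Bornology

theorem Complex.norm_exp_sub_one_le_mul_exp_max (w : ℂ) :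
    ‖exp w - 1‖ ≤ ‖w‖ * Real.exp (max w.re 0) := by
  have hbound : ∀ u ∈ segment ℝ 0 w, ‖exp u‖ ≤ Real.exp (max w.re 0) := by
    rintro _ ⟨s, t, hs, ht, hst, rfl⟩
    have ht1 : t ≤ 1 := by linarith
    rw [norm_exp, Real.exp_le_exp]
    calc (s • (0 : ℂ) + t • w).re = t * w.re := by simp
      _ ≤ t * max w.re 0 := by gcongr; exact le_max_left _ _
      _ ≤ max w.re 0 := mul_le_of_le_one_left (le_max_right _ _) ht1
  have := (convex_segment (0 : ℂ) w).norm_image_sub_le_of_norm_hasDerivWithin_le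
    (fun u _ => (hasDerivAt_exp u).hasDerivWithinAt) hbound
    (left_mem_segment ℝ 0 w) (right_mem_segment ℝ 0 w)
  simpa [mul_comm] using this

theorem Complex.norm_exp_sub_one_le_of_re_nonpos {w : ℂ} (hw : w.re ≤ 0) :
    ‖exp w - 1‖ ≤ ‖w‖ := by
  simpa [max_eq_right hw] using norm_exp_sub_one_le_mul_exp_max w

theorem Complex.norm_exp_sub_one_le_mul_exp_norm (w : ℂ) :
    ‖exp w - 1‖ ≤ ‖w‖ * Real.exp ‖w‖ := by
  refine (norm_exp_sub_one_le_mul_exp_max w).trans ?_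
  gcongr
  exact max_le (re_le_norm w) (norm_nonneg w)

noncomputable def expSubOneDiv (γ : ℝ) (z : ℂ) : ℂ :=
  (exp (2 * π * I * γ * z) - 1) / γ

section expSubOneDiv

variable {γ : ℝ} {z : ℂ}

lemma norm_two_pi_I_mul (hγ : 0 ≤ γ) (z : ℂ) : ‖2 * π * I * γ * z‖ = 2 * π * γ * ‖z‖ := by
  simp [abs_of_nonneg hγ, abs_of_nonneg pi_nonneg]

lemma re_two_pi_I_mul (γ : ℝ) (z : ℂ) : (2 * π * I * γ * z).re = -(2 * π * γ * z.im) := by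
  simp [mul_re, mul_im]

lemma norm_expSubOneDiv (hγ : 0 < γ) (z : ℂ) :
    ‖expSubOneDiv γ z‖ = ‖exp (2 * π * I * γ * z) - 1‖ / γ := by
  rw [expSubOneDiv, norm_div, norm_real, norm_of_nonneg hγ.le]

lemma norm_expSubOneDiv_le (hγ₀ : 0 < γ) (hγ₁ : γ ≤ 1) (z : ℂ) :
    ‖expSubOneDiv γ z‖ ≤ 2 * π * ‖z‖ * Real.exp (2 * π * ‖z‖) := by
  rw [norm_expSubOneDiv hγ₀, div_le_iff₀ hγ₀]
  refine (norm_exp_sub_one_le_mul_exp_norm _).trans ?_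
  rw [norm_two_pi_I_mul hγ₀.le]
  calc 2 * π * γ * ‖z‖ * Real.exp (2 * π * γ * ‖z‖)
      ≤ 2 * π * γ * ‖z‖ * Real.exp (2 * π * 1 * ‖z‖) := by gcongr
    _ = 2 * π * ‖z‖ * Real.exp (2 * π * ‖z‖) * γ := by rw [mul_one]; ring

lemma norm_expSubOneDiv_le_of_im_nonneg (hγ : 0 < γ) (hz : 0 ≤ z.im) :
    ‖expSubOneDiv γ z‖ ≤ 2 * π * ‖z‖ := by
  have hre : (2 * π * I * γ * z).re ≤ 0 := by
    rw [re_two_pi_I_mul, neg_nonpos]; positivity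
  rw [norm_expSubOneDiv hγ, div_le_iff₀ hγ]
  calc _ ≤ ‖2 * π * I * γ * z‖ := norm_exp_sub_one_le_of_re_nonpos hre
    _ = 2 * π * ‖z‖ * γ := by rw [norm_two_pi_I_mul hγ.le]; ring

lemma norm_expSubOneDiv_le_two_div (hγ : 0 < γ) (hz : 0 ≤ z.im) :
    ‖expSubOneDiv γ z‖ ≤ 2 / γ := by
  have hre : (2 * π * I * γ * z).re ≤ 0 := by
    rw [re_two_pi_I_mul, neg_nonpos]; positivity
  rw [norm_expSubOneDiv hγ]
  gcongr
  calc _ ≤ ‖exp (2 * π * I * γ * z)‖ + ‖(1 : ℂ)‖ := norm_sub_le _ _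
    _ ≤ 1 + 1 := by
      rw [norm_exp, norm_one]
      gcongr
      exact Real.exp_le_one_iff.2 hre
    _ = 2 := by norm_num

lemma expSubOneDiv_add (γ : ℝ) (z w : ℂ) :
    expSubOneDiv γ (z + w) = exp (2 * π * I * γ * z) * expSubOneDiv γ w + expSubOneDiv γ z := by
  simp only [expSubOneDiv, mul_add, Complex.exp_add]
  ring

lemma norm_expSubOneDiv_sub_re_le (hγ₀ : 0 < γ) (hγ₁ : γ ≤ 1) (z : ℂ) :
    ‖expSubOneDiv γ z - expSubOneDiv γ z.re‖
      ≤ 2 * π * |z.im| * Real.exp (2 * π * |z.im|) := by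
  have hphase : ‖exp (2 * π * I * γ * z.re)‖ = 1 := by
    rw [norm_exp, re_two_pi_I_mul]; simp
  nth_rw 1 [← re_add_im z]
  rw [expSubOneDiv_add, add_sub_cancel_right, norm_mul, hphase, one_mul]
  simpa using norm_expSubOneDiv_le hγ₀ hγ₁ (z.im * I)

end expSubOneDiv

noncomputable def expSubOneSeries {ι : Type*} (b : ι → ℂ) (γ : ι → ℝ) (z : ℂ) : ℂ :=
  ∑' i, b i * expSubOneDiv (γ i) z

section expSubOneSeries

variable {ι : Type*} {b : ι → ℂ} {γ : ι → ℝ}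

lemma summable_mul_expSubOneDiv (hγ₀ : ∀ i, 0 < γ i) (hγ₁ : ∀ i, γ i ≤ 1)
    (hb : Summable fun i => ‖b i‖) (z : ℂ) : Summable fun i => b i * expSubOneDiv (γ i) z :=
  (hb.mul_right _).of_norm_bounded fun i =>
    norm_mul_le_of_le le_rfl (norm_expSubOneDiv_le (hγ₀ i) (hγ₁ i) z)

lemma hasSum_expSubOneSeries (hγ₀ : ∀ i, 0 < γ i) (hγ₁ : ∀ i, γ i ≤ 1)
    (hb : Summable fun i => ‖b i‖) (z : ℂ) :
    HasSum (fun i => b i * expSubOneDiv (γ i) z) (expSubOneSeries b γ z) :=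
  (summable_mul_expSubOneDiv hγ₀ hγ₁ hb z).hasSum

lemma differentiable_expSubOneSeries (hγ₀ : ∀ i, 0 < γ i) (hγ₁ : ∀ i, γ i ≤ 1)
    (hb : Summable fun i => ‖b i‖) : Differentiable ℂ (expSubOneSeries b γ) := by
  have hball (R : ℝ) : DifferentiableOn ℂ (expSubOneSeries b γ) (Metric.ball 0 R) := by
    refine differentiableOn_tsum_of_summable_norm (hb.mul_right (2 * π * R * Real.exp (2 * π * R)))
      (fun i => by unfold expSubOneDiv; fun_prop) Metric.isOpen_ball fun i w hw => ?_
    have hwR : ‖w‖ ≤ R := (mem_ball_zero_iff.1 hw).le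
    refine norm_mul_le_of_le le_rfl <| (norm_expSubOneDiv_le (hγ₀ i) (hγ₁ i) w).trans ?_
    have hR : 0 ≤ R := (norm_nonneg w).trans hwR
    gcongr
  exact fun z => (hball (‖z‖ + 1)).differentiableAt <|
    Metric.isOpen_ball.mem_nhds (mem_ball_zero_iff.2 (lt_add_one _))

lemma expSubOneSeries_isLittleO (hγ : ∀ i, 0 < γ i) (hb : Summable fun i => ‖b i‖) :
    expSubOneSeries b γ =o[cobounded ℂ ⊓ 𝓟 {z | 0 ≤ z.im}] id := by
  set l := cobounded ℂ ⊓ 𝓟 {z : ℂ | 0 ≤ z.im}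
  have hupper : ∀ᶠ z in l, 0 ≤ z.im := mem_inf_of_right (mem_principal_self _)
  have hnorm : Tendsto (‖·‖) l atTop := tendsto_norm_cobounded_atTop.mono_left inf_le_left
  have hterm (i : ι) : Tendsto (fun z => b i * expSubOneDiv (γ i) z / z) l (𝓝 0) := by
    refine squeeze_zero_norm' (a := fun z => ‖b i‖ * (2 / γ i) * ‖z‖⁻¹) ?_ ?_
    · filter_upwards [hupper] with z hz
      rw [norm_div, div_eq_mul_inv]
      gcongr
      exact norm_mul_le_of_le le_rfl (norm_expSubOneDiv_le_two_div (hγ i) hz)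
    · simpa using (tendsto_inv_atTop_zero.comp hnorm).const_mul (‖b i‖ * (2 / γ i))
  have hbound : ∀ᶠ z in l, ∀ i, ‖b i * expSubOneDiv (γ i) z / z‖ ≤ ‖b i‖ * (2 * π) := by
    filter_upwards [hupper] with z hz i
    rw [norm_div]
    refine div_le_of_le_mul₀ (norm_nonneg _) (by positivity) ?_
    rw [mul_assoc]
    exact norm_mul_le_of_le le_rfl (norm_expSubOneDiv_le_of_im_nonneg (hγ i) hz)
  have hquot := tendsto_tsum_of_dominated_convergence (hb.mul_right _) hterm hbound
  simp only [tsum_zero, tsum_div_const] at hquot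
  refine (Asymptotics.isLittleO_iff_tendsto fun z hz => ?_).2 hquot
  simp [show z = 0 from hz, expSubOneSeries, expSubOneDiv]

lemma norm_expSubOneSeries_sub_re_le (hγ₀ : ∀ i, 0 < γ i) (hγ₁ : ∀ i, γ i ≤ 1)
    (hb : Summable fun i => ‖b i‖) {M : ℝ} {z : ℂ} (hz : |z.im| ≤ M) :
    ‖expSubOneSeries b γ z - expSubOneSeries b γ z.re‖
      ≤ (∑' i, ‖b i‖) * (2 * π * M * Real.exp (2 * π * M)) := by
  rw [expSubOneSeries, expSubOneSeries, ← (summable_mul_expSubOneDiv hγ₀ hγ₁ hb z).tsum_sub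
    (summable_mul_expSubOneDiv hγ₀ hγ₁ hb z.re)]
  refine tsum_of_norm_bounded (hb.hasSum.mul_right _) fun i => ?_
  rw [← mul_sub]
  refine norm_mul_le_of_le le_rfl <| (norm_expSubOneDiv_sub_re_le (hγ₀ i) (hγ₁ i) z).trans ?_
  have hM : 0 ≤ M := (abs_nonneg _).trans hz
  gcongr

end expSubOneSeries

theorem g_function_properties_general (b : ℝ → ℂ)
    (hsum : Summable fun γ : (Set.Ioo (0:ℝ) 1) => ‖b γ.1‖) :
    ∃ g : ℂ → ℂ,
      (∀ z : ℂ, HasSum (fun γ : (Set.Ioo (0:ℝ) 1) =>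
        b γ.1 * (Complex.exp (2 * π * Complex.I * γ.1 * z) - 1) / (γ.1 : ℂ)) (g z)) ∧
      Differentiable ℂ g ∧
      (∀ ε > (0:ℝ), ∃ R : ℝ, ∀ z : ℂ, 0 ≤ z.im → R ≤ ‖z‖ → ‖g z‖ ≤ ε * ‖z‖) ∧
      (∀ M > (0:ℝ), ∃ C : ℝ, ∀ z : ℂ, |z.im| < M → ‖g z - g (z.re : ℂ)‖ ≤ C) := by
  have hγ₀ (γ : Set.Ioo (0:ℝ) 1) : 0 < (γ : ℝ) := γ.2.1
  have hγ₁ (γ : Set.Ioo (0:ℝ) 1) : (γ : ℝ) ≤ 1 := γ.2.2.le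
  refine ⟨expSubOneSeries (fun γ : Set.Ioo (0:ℝ) 1 => b γ) Subtype.val, fun z => ?_,
    differentiable_expSubOneSeries hγ₀ hγ₁ hsum, fun ε hε => ?_,
    fun M _ => ⟨_, fun z hz => norm_expSubOneSeries_sub_re_le hγ₀ hγ₁ hsum hz.le⟩⟩
  · simpa only [expSubOneDiv, mul_div_assoc] using hasSum_expSubOneSeries hγ₀ hγ₁ hsum z
  · have hsmall := (expSubOneSeries_isLittleO hγ₀ hsum).def hε
    rw [eventually_inf_principal, hasBasis_cobounded_norm.eventually_iff] at hsmall
    obtain ⟨R, -, hR⟩ := hsmall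
    exact ⟨R, fun z hz hRz => hR hRz hz⟩

/-- for countable `Γ ⊂ (0,∞)` with `Σ_{0<γ<1}|b_γ| < ∞`, the function
`g(z) = Σ_{0<γ<1} b_γ (e^{2πiγz}-1)/γ` is a well-defined entire function with
`g(z) = o(|z|)` as `|z| → ∞` in the closed upper half-plane, and
`|g(z) - g(Re z)| ≤ C(M)` in every strip `|Im z| < M`. -/
theorem g_function_properties (b : ℝ → ℂ)
    (hsupp : (Function.support b).Countable)
    (hpos : ∀ γ : ℝ, γ ≤ 0 → b γ = 0)
    (hsum : Summable fun γ : (Set.Ioo (0:ℝ) 1) => ‖b γ.1‖) :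
    ∃ g : ℂ → ℂ,
      (∀ z : ℂ, HasSum (fun γ : (Set.Ioo (0:ℝ) 1) =>
        b γ.1 * (Complex.exp (2 * π * Complex.I * γ.1 * z) - 1) / (γ.1 : ℂ)) (g z)) ∧
      Differentiable ℂ g ∧
      (∀ ε > (0:ℝ), ∃ R : ℝ, ∀ z : ℂ, 0 ≤ z.im → R ≤ ‖z‖ → ‖g z‖ ≤ ε * ‖z‖) ∧
      (∀ M > (0:ℝ), ∃ C : ℝ, ∀ z : ℂ, |z.im| < M → ‖g z - g (z.re : ℂ)‖ ≤ C) :=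
  g_function_properties_general b hsum
end
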